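/- Let a be a real number with a ≥ 0. For any composition k = (k_1,...,k_r), complex numbers x_1,...,x_r in the closed unit disk, and integers l ≥ 0, n ≥ 1, Σ_{n ≥ n_1 ≥ ... ≥ n_r > 0} Π_{j=1}^r x_j^{n_j+l+a}/(n_j+l+a)^{k_j} = (-1)^r Σ_{j=0}^r (-1)^j ζ_{n+l}^⋆(k_1,...,k_j; x_1,...,x_j; a) · ζ_l(k_r,...,k_{j+1}; x_r,...,x_{j+1}; a). -/

import Mathlib

/-!
Since `(m + l) + a = m + (l + a)`, the left-hand side is the star sum over indices in `(l, n + l]`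
with parameter `a`. Peeling off the outermost index, the sum over `l < m ≤ n + l` is the difference
of the star sums truncated at `n + l` and at `l`, so induction on the depth reduces the claim to the
antipode relation `Σ_j (-1)^j ζ^⋆_l(k_1,…,k_j) ζ_l(k_r,…,k_{j+1}) = 0` for `r ≥ 1`. That relation
telescopes: the `j`-th product splits, according to how `n_j` compares with the innermost index of
the strict chain, into two mixed sums (a star chain followed by a strict chain), and consecutive
products share one of them.
-/

open Finset

/-- Parametric multiple harmonic sum
`ζ_m(k;x;a) = Σ_{m ≥ n_1 > ... > n_r ≥ 1} Π x_j^{n_j+a}/(n_j+a)^{k_j}` (principal branch powers). -/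
noncomputable def pmhs (a : ℂ) : ℕ → List (ℕ × ℂ) → ℂ
  | _, [] => 1
  | n, (k, x) :: rest =>
      ∑ m ∈ Finset.Icc 1 n, x ^ ((m : ℂ) + a) / ((m : ℂ) + a) ^ k * pmhs a (m - 1) rest

/-- Parametric multiple harmonic star sum `ζ_m^⋆(k;x;a)`. -/
noncomputable def pmhss (a : ℂ) : ℕ → List (ℕ × ℂ) → ℂ
  | _, [] => 1
  | n, (k, x) :: rest =>
      ∑ m ∈ Finset.Icc 1 n, x ^ ((m : ℂ) + a) / ((m : ℂ) + a) ^ k * pmhss a m rest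

noncomputable def pmhsTerm (a : ℂ) (k : ℕ) (x : ℂ) (m : ℕ) : ℂ :=
  x ^ ((m : ℂ) + a) / ((m : ℂ) + a) ^ k

lemma pmhs_cons (a : ℂ) (n k : ℕ) (x : ℂ) (L : List (ℕ × ℂ)) :
    pmhs a n ((k, x) :: L) = ∑ m ∈ Icc 1 n, pmhsTerm a k x m * pmhs a (m - 1) L :=
  rfl

lemma pmhss_cons (a : ℂ) (n k : ℕ) (x : ℂ) (L : List (ℕ × ℂ)) :
    pmhss a n ((k, x) :: L) = ∑ m ∈ Icc 1 n, pmhsTerm a k x m * pmhss a m L :=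
  rfl

lemma pmhsTerm_natCast_add (a : ℂ) (l k : ℕ) (x : ℂ) (m : ℕ) :
    pmhsTerm ((l : ℂ) + a) k x m = pmhsTerm a k x (m + l) := by
  simp only [pmhsTerm, Nat.cast_add, add_assoc, add_comm (l : ℂ) a]

lemma pmhss_succ_cons (a : ℂ) (n k : ℕ) (x : ℂ) (L : List (ℕ × ℂ)) :
    pmhss a (n + 1) ((k, x) :: L) =
      pmhss a n ((k, x) :: L) + pmhsTerm a k x (n + 1) * pmhss a (n + 1) L := by
  rw [pmhss_cons, pmhss_cons, sum_Icc_succ_top (by omega)]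

lemma pmhss_add_cons_sub (a : ℂ) (n l k : ℕ) (x : ℂ) (L : List (ℕ × ℂ)) :
    pmhss a (n + l) ((k, x) :: L) - pmhss a l ((k, x) :: L) =
      ∑ m ∈ Icc 1 n, pmhsTerm a k x (m + l) * pmhss a (m + l) L := by
  induction n with
  | zero => simp
  | succ n ih =>
    rw [show n + 1 + l = n + l + 1 by omega, pmhss_succ_cons, sum_Icc_succ_top (by omega), ← ih,
      show n + 1 + l = n + l + 1 by omega]
    ring

noncomputable def pmhsAbove (a : ℂ) (t : ℕ) : ℕ → List (ℕ × ℂ) → ℂ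
  | _, [] => 1
  | b, (k, x) :: L => ∑ m ∈ Ioc t b, pmhsTerm a k x m * pmhsAbove a t (m - 1) L

lemma pmhs_eq_pmhsAbove_zero (a : ℂ) (L : List (ℕ × ℂ)) (b : ℕ) :
    pmhs a b L = pmhsAbove a 0 b L := by
  induction L generalizing b with
  | nil => rfl
  | cons e L ih =>
    obtain ⟨k, x⟩ := e
    simp only [pmhs_cons, pmhsAbove, ih, ← Icc_add_one_left_eq_Ioc, zero_add]

lemma pmhsAbove_concat (a : ℂ) (L : List (ℕ × ℂ)) (t b k : ℕ) (x : ℂ) :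
    pmhsAbove a t b (L ++ [(k, x)]) = ∑ m ∈ Ioc t b, pmhsTerm a k x m * pmhsAbove a m b L := by
  induction L generalizing t b with
  | nil => rfl
  | cons e L ih =>
    obtain ⟨k', x'⟩ := e
    calc pmhsAbove a t b ((k', x') :: L ++ [(k, x)])
        = ∑ p ∈ Ioc t b, ∑ m ∈ Ioc t (p - 1),
            pmhsTerm a k' x' p * (pmhsTerm a k x m * pmhsAbove a m (p - 1) L) := by
          simp only [List.cons_append, pmhsAbove, ih, mul_sum]
      _ = ∑ m ∈ Ioc t b, ∑ p ∈ Ioc m b,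
            pmhsTerm a k' x' p * (pmhsTerm a k x m * pmhsAbove a m (p - 1) L) :=
          sum_comm' fun p m => by simp only [mem_Ioc]; omega
      _ = ∑ m ∈ Ioc t b, pmhsTerm a k x m * pmhsAbove a m b ((k', x') :: L) := by
          simp only [pmhsAbove, mul_sum]
          exact sum_congr rfl fun m _ => sum_congr rfl fun p _ => by ring


/-- Sum over `b ≥ n₁ ≥ ⋯ ≥ nₛ ≥ 1` (weights from `P`) and `nₛ < p₁ < ⋯ < pₜ ≤ l` (weights from
`Q`, read from the innermost index outwards), where `n₀ = b`. -/
noncomputable def pmhssMixed (a : ℂ) (l : ℕ) (Q : List (ℕ × ℂ)) : ℕ → List (ℕ × ℂ) → ℂ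
  | b, [] => pmhsAbove a b l Q.reverse
  | b, (k, x) :: P => ∑ m ∈ Icc 1 b, pmhsTerm a k x m * pmhssMixed a l Q m P

lemma pmhssMixed_nil_left (a : ℂ) (l : ℕ) (P : List (ℕ × ℂ)) (b : ℕ) :
    pmhssMixed a l [] b P = pmhss a b P := by
  induction P generalizing b with
  | nil => rfl
  | cons e P ih =>
    obtain ⟨k, x⟩ := e
    simp only [pmhssMixed, pmhss_cons, ih]

lemma pmhssMixed_self_nil (a : ℂ) (l k : ℕ) (x : ℂ) (Q : List (ℕ × ℂ)) :
    pmhssMixed a l ((k, x) :: Q) l [] = 0 := by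
  simp [pmhssMixed, pmhsAbove_concat]

/-- Splitting according to whether the innermost index of the star chain is below the innermost
index of the strict chain or not. -/
lemma pmhss_mul_pmhs_reverse_cons (a : ℂ) (l k : ℕ) (x : ℂ) (Q P : List (ℕ × ℂ)) (b : ℕ)
    (hb : b ≤ l) :
    pmhss a b P * pmhs a l ((k, x) :: Q).reverse =
      pmhssMixed a l ((k, x) :: Q) b P + pmhssMixed a l Q b (P ++ [(k, x)]) := by
  induction P generalizing b with
  | nil =>
    simp only [pmhss, one_mul, List.nil_append, pmhssMixed, List.reverse_cons,
      pmhs_eq_pmhsAbove_zero, pmhsAbove_concat]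
    rw [show Icc 1 b = Ioc 0 b from Icc_add_one_left_eq_Ioc 0 b, add_comm,
      sum_Ioc_consecutive _ b.zero_le hb]
  | cons e P ih =>
    obtain ⟨k', x'⟩ := e
    simp only [List.cons_append, pmhss_cons, pmhssMixed, sum_mul, ← sum_add_distrib]
    refine sum_congr rfl fun m hm => ?_
    rw [mul_assoc, ih m ((mem_Icc.mp hm).2.trans hb), mul_add]


lemma sum_range_neg_one_pow_mul_add_succ {R : Type*} [CommRing R] (g : ℕ → R) (r : ℕ) :
    ∑ j ∈ range r, (-1) ^ j * (g j + g (j + 1)) = g 0 - (-1) ^ r * g r := by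
  induction r with
  | zero => simp
  | succ r ih => rw [sum_range_succ, ih]; ring

noncomputable def pmhsAltSum (a : ℂ) (l N : ℕ) (L : List (ℕ × ℂ)) : ℂ :=
  ∑ j ∈ range (L.length + 1), (-1) ^ j * pmhss a N (L.take j) * pmhs a l (L.drop j).reverse

lemma pmhsAltSum_self_eq_zero (a : ℂ) (l : ℕ) {L : List (ℕ × ℂ)} (hL : L ≠ []) :
    pmhsAltSum a l l L = 0 := by
  set g : ℕ → ℂ := fun j => pmhssMixed a l (L.drop j) l (L.take j)
  have hsplit : ∀ j < L.length,
      pmhss a l (L.take j) * pmhs a l (L.drop j).reverse = g j + g (j + 1) := by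
    intro j hj
    simp only [g]
    rw [List.drop_eq_getElem_cons hj, ← List.take_concat_get' L j hj]
    exact pmhss_mul_pmhs_reverse_cons a l L[j].1 L[j].2 _ _ l le_rfl
  have hlast : pmhss a l (L.take L.length) * pmhs a l (L.drop L.length).reverse = g L.length := by
    simp [g, pmhssMixed_nil_left, pmhs]
  have hfirst : g 0 = 0 := by
    obtain ⟨⟨k, x⟩, L, rfl⟩ := List.exists_cons_of_ne_nil hL
    exact pmhssMixed_self_nil a l k x L
  rw [pmhsAltSum, sum_range_succ, mul_assoc, hlast]
  calc ∑ j ∈ range L.length, (-1) ^ j * pmhss a l (L.take j) * pmhs a l (L.drop j).reverse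
        + (-1) ^ L.length * g L.length
      = ∑ j ∈ range L.length, (-1) ^ j * (g j + g (j + 1)) + (-1) ^ L.length * g L.length := by
        refine congrArg (· + _) (sum_congr rfl fun j hj => ?_)
        rw [mul_assoc, hsplit j (mem_range.mp hj)]
    _ = 0 := by rw [sum_range_neg_one_pow_mul_add_succ, hfirst]; ring


lemma pmhsAltSum_cons (a : ℂ) (l N k : ℕ) (x : ℂ) (L : List (ℕ × ℂ)) :
    pmhsAltSum a l N ((k, x) :: L) = pmhs a l ((k, x) :: L).reverse -
      ∑ j ∈ range (L.length + 1),
        (-1) ^ j * pmhss a N ((k, x) :: L.take j) * pmhs a l (L.drop j).reverse := by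
  rw [pmhsAltSum, List.length_cons, sum_range_succ', sub_eq_add_neg, add_comm, ← sum_neg_distrib]
  simp [pmhss, pow_succ]

theorem pmhss_natCast_add (a : ℂ) (l : ℕ) (L : List (ℕ × ℂ)) (n : ℕ) :
    pmhss ((l : ℂ) + a) n L = (-1) ^ L.length * pmhsAltSum a l (n + l) L := by
  induction L generalizing n with
  | nil => simp [pmhsAltSum, pmhss, pmhs]
  | cons e L ih =>
    obtain ⟨k, x⟩ := e
    set G : ℕ → ℂ := fun N => ∑ j ∈ range (L.length + 1),
      (-1) ^ j * pmhss a N ((k, x) :: L.take j) * pmhs a l (L.drop j).reverse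
    have hG : G (n + l) - G l =
        ∑ m ∈ Icc 1 n, pmhsTerm a k x (m + l) * pmhsAltSum a l (m + l) L := by
      simp only [G, pmhsAltSum, ← sum_sub_distrib, mul_sum]
      rw [sum_comm]
      refine sum_congr rfl fun j _ => ?_
      rw [← sub_mul, ← mul_sub, pmhss_add_cons_sub, mul_sum, sum_mul]
      exact sum_congr rfl fun m _ => by ring
    have hantipode := pmhsAltSum_self_eq_zero a l (L := (k, x) :: L) (List.cons_ne_nil _ _)
    rw [pmhsAltSum_cons] at hantipode
    calc pmhss ((l : ℂ) + a) n ((k, x) :: L)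
        = (-1) ^ L.length * (G (n + l) - G l) := by
          simp only [pmhss_cons, pmhsTerm_natCast_add, ih, hG, mul_sum]
          exact sum_congr rfl fun m _ => by ring
      _ = (-1) ^ ((k, x) :: L).length * pmhsAltSum a l (n + l) ((k, x) :: L) := by
          rw [pmhsAltSum_cons, List.length_cons]
          linear_combination (-1) ^ L.length * hantipode

theorem stmt5_general (a : ℝ) (ks : List ℕ) (xs : List ℂ)
    (hlen : ks.length = xs.length) (l : ℕ) (n : ℕ) :
    pmhss ((l : ℂ) + (a : ℂ)) n (ks.zip xs) =
      (-1 : ℂ) ^ ks.length * ∑ j ∈ Finset.range (ks.length + 1),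
        (-1 : ℂ) ^ j * pmhss (a : ℂ) (n + l) ((ks.take j).zip (xs.take j)) *
          pmhs (a : ℂ) l (((ks.drop j).zip (xs.drop j)).reverse) := by
  have hzip : (ks.zip xs).length = ks.length := by simp [hlen]
  rw [pmhss_natCast_add, pmhsAltSum, hzip]
  simp only [List.zip, List.take_zipWith, List.drop_zipWith]

/-- The shifted parametric star sum
`Σ_{n ≥ n_1 ≥ ... ≥ n_r > 0} Π x_j^{n_j+l+a}/(n_j+l+a)^{k_j}` is `pmhss (l+a) n`. -/
theorem stmt5 (a : ℝ) (ha : 0 ≤ a) (ks : List ℕ) (xs : List ℂ)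
    (hlen : ks.length = xs.length) (hk : ∀ k ∈ ks, 1 ≤ k)
    (hx : ∀ x ∈ xs, ‖x‖ ≤ 1) (l : ℕ) (n : ℕ) (hn : 1 ≤ n) :
    pmhss ((l : ℂ) + (a : ℂ)) n (ks.zip xs) =
      (-1 : ℂ) ^ ks.length * ∑ j ∈ Finset.range (ks.length + 1),
        (-1 : ℂ) ^ j * pmhss (a : ℂ) (n + l) ((ks.take j).zip (xs.take j)) *
          pmhs (a : ℂ) l (((ks.drop j).zip (xs.drop j)).reverse) :=
  stmt5_general a ks xs hlen l n
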